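/- Let ρ ∈ (0,1) and ε > 0 satisfy ρ(2 + ε) = 1. Define V : [0,1] → ℝ by V(m) = m²/(2(1−ρ)) for m ≤ ε and V(m) = −ε/(2(1−ρ)) + m/(2ρ) for m > ε. Then: (a) V is continuous at m = ε; (b) V is monotone increasing on [0,1]; (c) for m ≤ ε, V satisfies V(m) = m²/2 + ρ·V(m); and (d) for m > ε, setting m' = −m² + (2+ε)m − ε, V satisfies V(m) = m²/2 + ρ·V(m'). -/

import Mathlib

open Set

/-!
Both Bellman identities are direct computations once one knows which branch each side uses.
For `m ≤ ε` the worst-case transition vanishes and `m²/(2(1-ρ))` is the fixed point of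
`v ↦ m²/2 + ρ v`. For `ε < m < 2` the next mass satisfies `m' - ε = (m - ε)(2 - m) > 0`,
so both sides are affine, and `ρ(2 + ε) = 1` turns the `(2 + ε)m/2` coming from `m'` into
the slope `m/(2ρ)`. The same constraint makes the two branches agree at `ε`, which gives
continuity and lets monotonicity pass from the quadratic branch to the affine one.
-/

noncomputable def mfgValue (ρ ε m : ℝ) : ℝ :=
  if m ≤ ε then m ^ 2 / (2 * (1 - ρ)) else -ε / (2 * (1 - ρ)) + m / (2 * ρ)

/-- `(1 - m)(m - ε) + m`: the worst-case transition `1 → 2` has probability `m - ε`. -/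
def nextMass (ε m : ℝ) : ℝ :=
  -m ^ 2 + (2 + ε) * m - ε

section

variable {ρ ε : ℝ}

theorem sq_div_eq_affine_at_threshold (hρ : ρ ≠ 1) (h : ρ * (2 + ε) = 1) :
    ε ^ 2 / (2 * (1 - ρ)) = -ε / (2 * (1 - ρ)) + ε / (2 * ρ) := by
  have hρ0 : ρ ≠ 0 := left_ne_zero_of_mul_eq_one h
  have hρ1 : 1 - ρ ≠ 0 := sub_ne_zero.mpr hρ.symm
  field_simp
  linear_combination ε * h

theorem continuous_mfgValue (hρ : ρ ≠ 1) (h : ρ * (2 + ε) = 1) :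
    Continuous (mfgValue ρ ε) :=
  Continuous.if_le (by fun_prop) (by fun_prop) continuous_id continuous_const
    (by rintro _ rfl; exact sq_div_eq_affine_at_threshold hρ h)

theorem monotoneOn_mfgValue (hρ0 : 0 < ρ) (hρ1 : ρ < 1) (h : ρ * (2 + ε) = 1) :
    MonotoneOn (mfgValue ρ ε) (Ici 0) := by
  have h1ρ : 0 < 1 - ρ := sub_pos.mpr hρ1
  intro a (ha : 0 ≤ a) b _ hab
  simp only [mfgValue]
  split_ifs with haε hbε hbε
  · gcongr
  · calc a ^ 2 / (2 * (1 - ρ)) ≤ ε ^ 2 / (2 * (1 - ρ)) := by gcongr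
      _ = -ε / (2 * (1 - ρ)) + ε / (2 * ρ) := sq_div_eq_affine_at_threshold hρ1.ne h
      _ ≤ -ε / (2 * (1 - ρ)) + b / (2 * ρ) := by gcongr; linarith
  · linarith
  · gcongr

theorem mfgValue_bellman_of_le (hρ : ρ ≠ 1) {m : ℝ} (hm : m ≤ ε) :
    mfgValue ρ ε m = m ^ 2 / 2 + ρ * mfgValue ρ ε m := by
  have hρ1 : 1 - ρ ≠ 0 := sub_ne_zero.mpr hρ.symm
  rw [mfgValue, if_pos hm]
  field_simp
  ring

theorem lt_nextMass {m : ℝ} (hεm : ε < m) (hm : m < 2) : ε < nextMass ε m := by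
  have : nextMass ε m - ε = (m - ε) * (2 - m) := by rw [nextMass]; ring
  nlinarith

theorem mfgValue_bellman_of_lt (hρ : ρ ≠ 1) (h : ρ * (2 + ε) = 1) {m : ℝ} (hεm : ε < m)
    (hm : m < 2) : mfgValue ρ ε m = m ^ 2 / 2 + ρ * mfgValue ρ ε (nextMass ε m) := by
  have hρ0 : ρ ≠ 0 := left_ne_zero_of_mul_eq_one h
  have hρ1 : 1 - ρ ≠ 0 := sub_ne_zero.mpr hρ.symm
  rw [mfgValue, mfgValue, if_neg hεm.not_ge, if_neg (lt_nextMass hεm hm).not_ge, nextMass]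
  field_simp
  linear_combination (-(1 - ρ) * m) * h

end

theorem solvable_mfg_value_function_general (ρ ε : ℝ) (hρ0 : 0 < ρ) (hρ1 : ρ < 1)
    (hconstraint : ρ * (2 + ε) = 1)
    (V : ℝ → ℝ)
    (hV : ∀ m : ℝ, V m = if m ≤ ε then m ^ 2 / (2 * (1 - ρ))
      else -ε / (2 * (1 - ρ)) + m / (2 * ρ)) :
    ContinuousAt V ε ∧
    MonotoneOn V (Set.Icc 0 1) ∧
    (∀ m ∈ Set.Icc (0 : ℝ) 1, m ≤ ε → V m = m ^ 2 / 2 + ρ * V m) ∧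
    (∀ m ∈ Set.Icc (0 : ℝ) 1, ε < m →
      V m = m ^ 2 / 2 + ρ * V (-m ^ 2 + (2 + ε) * m - ε)) := by
  obtain rfl : V = mfgValue ρ ε := funext hV
  exact ⟨(continuous_mfgValue hρ1.ne hconstraint).continuousAt,
    (monotoneOn_mfgValue hρ0 hρ1 hconstraint).mono Icc_subset_Ici_self,
    fun m _ hm => mfgValue_bellman_of_le hρ1.ne hm,
    fun m hm hεm => mfgValue_bellman_of_lt hρ1.ne hconstraint hεm (by linarith [hm.2])⟩

/-- Closed-form equilibrium value function of the solvable two-state MFG: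
under the parameter constraint `ρ(2+ε) = 1`, the piecewise function
`V(m) = m²/(2(1−ρ))` for `m ≤ ε`, `V(m) = −ε/(2(1−ρ)) + m/(2ρ)` for `m > ε`
is continuous at `ε`, monotone on `[0,1]`, and satisfies the Bellman
recursions in both regimes. -/
theorem solvable_mfg_value_function (ρ ε : ℝ) (hρ0 : 0 < ρ) (hρ1 : ρ < 1)
    (hε : 0 < ε) (hconstraint : ρ * (2 + ε) = 1)
    (V : ℝ → ℝ)
    (hV : ∀ m : ℝ, V m = if m ≤ ε then m ^ 2 / (2 * (1 - ρ))
      else -ε / (2 * (1 - ρ)) + m / (2 * ρ)) :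
    ContinuousAt V ε ∧
    MonotoneOn V (Set.Icc 0 1) ∧
    (∀ m ∈ Set.Icc (0 : ℝ) 1, m ≤ ε → V m = m ^ 2 / 2 + ρ * V m) ∧
    (∀ m ∈ Set.Icc (0 : ℝ) 1, ε < m →
      V m = m ^ 2 / 2 + ρ * V (-m ^ 2 + (2 + ε) * m - ε)) :=
  solvable_mfg_value_function_general ρ ε hρ0 hρ1 hconstraint V hV
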